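/- arXiv:0912.2933 — 5 statements merged into one kernel-verified Lean document; each statement's English description precedes it below -/
import Mathlib

section
/- Let K be a field of prime characteristic p and C a cyclic group of order q = p^k with k ≥ 1. For every n with 0 < n < q, the trivial one-dimensional K[C]-module is not isomorphic to a direct summand of the exterior power ⋀^n(K[C]) of the regular module; that is, there is no K[C]-module M with ⋀^n(K[C]) ≅ V_1 ⊕ M, where V_1 is the one-dimensional trivial module. -/
/-! The monomials `e_s = ⋀_{c ∈ s} c` over the `n`-subsets `s ⊆ C` form a basis of `⋀^n K[C]`,
and `g` maps `e_s` to `± e_{g s}`. If `w` is `g`-fixed and `φ` is a `g`-invariant functional,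
then `s ↦ w_s φ(e_s)` is constant on `⟨g⟩`-orbits of `n`-subsets; for `0 < n < q` none of these
orbits is a single point, so every orbit has size divisible by `p` and `φ w = ∑ₛ w_s φ(e_s) = 0`.
A decomposition `e : ⋀^n K[C] ≃ K × M` would provide such `w = e⁻¹(1, 0)` and `φ = fst ∘ e`
with `φ w = 1`. -/

theorem submodule_pow_mono {R A : Type*} [CommSemiring R] [Semiring A] [Algebra R A]
    {p q : Submodule R A} (h : p ≤ q) : ∀ n : ℕ, p ^ n ≤ q ^ n := by
  intro n
  induction n with
  | zero => simp
  | succ n ih => rw [pow_succ, pow_succ]; exact mul_le_mul' ih h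

theorem map_mem_exteriorPower {R : Type*} [CommRing R] {M N : Type*}
    [AddCommGroup M] [Module R M] [AddCommGroup N] [Module R N]
    (n : ℕ) (f : M →ₗ[R] N) :
    ∀ x ∈ ⋀[R]^n M, ExteriorAlgebra.map f x ∈ ⋀[R]^n N := by
  intro x hx
  have h : Submodule.map (ExteriorAlgebra.map f).toLinearMap (⋀[R]^n M) ≤ ⋀[R]^n N := by
    show Submodule.map _ ((LinearMap.range (ExteriorAlgebra.ι R (M := M))) ^ n) ≤
      (LinearMap.range (ExteriorAlgebra.ι R (M := N))) ^ n
    rw [Submodule.map_pow, ExteriorAlgebra.ι_range_map_map]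
    refine submodule_pow_mono ?_ n
    exact Submodule.map_le_iff_le_comap.2 (fun z _ => LinearMap.mem_range_self _ z)
  exact h ⟨x, hx, rfl⟩

noncomputable def epMap {R : Type*} [CommRing R] {M N : Type*}
    [AddCommGroup M] [Module R M] [AddCommGroup N] [Module R N]
    (n : ℕ) (f : M →ₗ[R] N) : (⋀[R]^n M) →ₗ[R] (⋀[R]^n N) :=
  (ExteriorAlgebra.map f).toLinearMap.restrict (map_mem_exteriorPower n f)

open MulAction

open Finset in
theorem IsPGroup.sum_eq_zero_of_invariant {p : ℕ} [Fact p.Prime] {G X R : Type*} [Group G]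
    [MulAction G X] [Fintype X] [CommRing R] [CharP R p] (hG : IsPGroup p G)
    (hfix : ∀ x : X, ∃ c : G, c • x ≠ x) (f : X → R) (hf : ∀ (c : G) (x : X), f (c • x) = f x) :
    ∑ x, f x = 0 := by
  classical
  have hfiber (b : R) : p ∣ Nat.card {x // f x = b} := by
    let Y : SubMulAction G X := ⟨{x | f x = b}, fun c x hx => (hf c x).trans hx⟩
    have hY : Nat.card (fixedPoints G Y) = 0 := Nat.card_eq_zero.2 <| .inl ⟨fun ⟨y, hy⟩ => by
      obtain ⟨c, hc⟩ := hfix y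
      exact hc (congrArg Subtype.val (hy c))⟩
    exact Nat.modEq_zero_iff_dvd.1 (hY ▸ hG.card_modEq_card_fixedPoints Y)
  calc ∑ x, f x = ∑ b ∈ univ.image f, #{x | f x = b} • b := sum_comp (fun b => b) f
    _ = 0 := sum_eq_zero fun b _ => by
      rw [← Fintype.card_subtype, ← Nat.card_eq_fintype_card, nsmul_eq_mul,
        (CharP.cast_eq_zero_iff R p _).2 (hfiber b), zero_mul]

namespace Set.powersetCard

theorem exists_smul_ne {G α : Type*} [Group G] [MulAction G α] [DecidableEq α] [Fintype α]
    [IsPretransitive G α] {n : ℕ} (h0 : 0 < n) (h1 : n < Fintype.card α)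
    (s : powersetCard α n) : ∃ c : G, c • s ≠ s := by
  have hs : (s : Finset α).card = n := card_eq s
  obtain ⟨x, hx⟩ : (s : Finset α).Nonempty := Finset.card_pos.1 (by rw [hs]; exact h0)
  obtain ⟨y, -, hy⟩ := Finset.exists_mem_notMem_of_card_lt_card
    (show (s : Finset α).card < Finset.univ.card by rw [hs, Finset.card_univ]; exact h1)
  obtain ⟨c, rfl⟩ := exists_smul_eq G x y
  refine ⟨c, fun hc => hy ?_⟩
  rw [← hc, coe_smul]
  exact Finset.smul_mem_smul_finset hx

theorem map_mulLeftEmbedding {G : Type*} [Group G] [DecidableEq G] {n : ℕ} (g : G)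
    (s : powersetCard G n) : map n (mulLeftEmbedding g) s = g • s := by
  ext x
  simp [Finset.mem_smul_finset]

end Set.powersetCard

namespace exteriorPower

open Set.powersetCard

theorem ιMulti_comp_embedding {R M I : Type*} [CommRing R] [AddCommGroup M] [Module R M]
    [LinearOrder I] {n : ℕ} (v : I → M) (α : Fin n ↪ I) :
    ∃ ε : R, ιMulti R n (v ∘ α) = ε • ιMulti_family R n v (ofFinEmb n I α) := by
  set e := ofFinEmbEquiv.symm (ofFinEmb n I α)
  have hrange : Set.range α = Set.range e := by
    ext i
    rw [mem_range_ofFinEmbEquiv_symm_iff_mem, mem_ofFinEmb_iff_mem_range]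
  let π : Equiv.Perm (Fin n) := (Equiv.ofInjective α α.injective).trans
    ((Equiv.setCongr hrange).trans (Equiv.ofInjective e e.injective).symm)
  have hπ : v ∘ α = (v ∘ e) ∘ π := by
    ext i
    simp [π, Equiv.apply_ofInjective_symm]
  refine ⟨(Equiv.Perm.sign π : ℤ), ?_⟩
  rw [hπ, AlternatingMap.map_perm, Units.smul_def]
  exact (Int.cast_smul_eq_zsmul R _ _).symm

theorem map_ιMulti_family_of_comp_eq {R M N I J : Type*} [CommRing R] [AddCommGroup M]
    [Module R M] [AddCommGroup N] [Module R N] [LinearOrder I] [LinearOrder J] {n : ℕ}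
    {f : M →ₗ[R] N} {v : I → M} {v' : J → N} {τ : I ↪ J} (hf : f ∘ v = v' ∘ τ)
    (s : Set.powersetCard I n) : ∃ ε : R,
      map n f (ιMulti_family R n v s) = ε • ιMulti_family R n v' (Set.powersetCard.map n τ s) := by
  set e := ofFinEmbEquiv.symm s
  have hs : Set.powersetCard.map n τ s = ofFinEmb n J (e.toEmbedding.trans τ) := by
    apply SetLike.coe_injective
    rw [coe_map, coe_ofFinEmb, Function.Embedding.coe_trans, Set.range_comp]
    congr 1
    ext i
    exact (mem_range_ofFinEmbEquiv_symm_iff_mem s i).symm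
  rw [map_apply_ιMulti_family, ιMulti_family, hf, hs, Function.comp_assoc]
  exact ιMulti_comp_embedding v' (e.toEmbedding.trans τ)

end exteriorPower

theorem epMap_eq_map {R M N : Type*} [CommRing R] [AddCommGroup M] [Module R M]
    [AddCommGroup N] [Module R N] (n : ℕ) (f : M →ₗ[R] N) :
    epMap n f = exteriorPower.map n f := by
  ext v
  simp only [LinearMap.compAlternatingMap_apply, exteriorPower.map_apply_ιMulti,
    exteriorPower.ιMulti_apply_coe]
  exact ExteriorAlgebra.map_apply_ιMulti f v

theorem Module.Basis.repr_mul_apply_basis_eq_of_monomial {R V X : Type*} [CommRing R]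
    [AddCommGroup V] [Module R V] (B : Basis X R V) {σ : V →ₗ[R] V} {τ : X → X}
    (hτ : Function.Injective τ) {ε : X → R} (hσ : ∀ x, σ (B x) = ε x • B (τ x))
    {φ : V →ₗ[R] R} (hφ : φ ∘ₗ σ = φ) {w : V} (hw : σ w = w) (x : X) :
    B.repr w (τ x) * φ (B (τ x)) = B.repr w x * φ (B x) := by
  have hcoord : B.coord (τ x) ∘ₗ σ = ε x • B.coord x := B.ext fun y => by
    by_cases hxy : y = x
    · subst hxy; simp [hσ]
    · simp [hσ, hτ.ne hxy, hxy]
  have hrepr : B.repr w (τ x) = ε x * B.repr w x := by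
    simpa [hw] using LinearMap.congr_fun hcoord w
  have hφx : φ (B x) = ε x * φ (B (τ x)) := by
    simpa [hσ] using (LinearMap.congr_fun hφ (B x)).symm
  rw [hrepr, hφx]
  ring

theorem MonoidAlgebra.mulLeft_of_comp_basis {R G : Type*} [CommSemiring R] [Monoid G] (g : G) :
    LinearMap.mulLeft R (of R G g) ∘ basis G R = basis G R ∘ (g * ·) := by
  ext x
  simp [of_apply]

theorem exteriorPower.apply_eq_zero_of_map_mulLeft_invariant {p : ℕ} [Fact p.Prime]
    {R C : Type*} [CommRing R] [CharP R p] [Group C] [Fintype C] (hC : IsPGroup p C)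
    {g : C} (hg : ∀ c : C, c ∈ Subgroup.zpowers g) {n : ℕ} (h0 : 0 < n) (h1 : n < Fintype.card C)
    {φ : ⋀[R]^n (MonoidAlgebra R C) →ₗ[R] R}
    (hφ : φ ∘ₗ map n (LinearMap.mulLeft R (MonoidAlgebra.of R C g)) = φ)
    {w : ⋀[R]^n (MonoidAlgebra R C)}
    (hw : map n (LinearMap.mulLeft R (MonoidAlgebra.of R C g)) w = w) : φ w = 0 := by
  classical
  let : LinearOrder C := LinearOrder.lift' (Fintype.equivFin C) (Fintype.equivFin C).injective
  set B := (MonoidAlgebra.basis C R).exteriorPower n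
  have hσ (s : Set.powersetCard C n) : ∃ ε : R,
      map n (LinearMap.mulLeft R (MonoidAlgebra.of R C g)) (B s) = ε • B (g • s) := by
    simp only [B, basis_apply, ← Set.powersetCard.map_mulLeftEmbedding]
    exact map_ιMulti_family_of_comp_eq (MonoidAlgebra.mulLeft_of_comp_basis g) s
  choose ε hε using hσ
  set f : Set.powersetCard C n → R := fun s => B.repr w s * φ (B s)
  have hf_gen (s) : f (g • s) = f s :=
    B.repr_mul_apply_basis_eq_of_monomial (MulAction.injective g) hε hφ hw s
  have hf (c : C) (s) : f (c • s) = f s := by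
    obtain ⟨i, rfl⟩ := (isOfFinOrder_of_finite g).mem_powers_iff_mem_zpowers.2 (hg c)
    induction i generalizing s with
    | zero => simp
    | succ i ih => simp only [pow_succ, mul_smul, hf_gen, ih]
  calc φ w = φ (∑ s, B.repr w s • B s) := by rw [B.sum_repr]
    _ = ∑ s, f s := by simp only [map_sum, map_smul, smul_eq_mul, f]
    _ = 0 := hC.sum_eq_zero_of_invariant (Set.powersetCard.exists_smul_ne h0 h1) f hf

theorem trivial_not_summand_of_exteriorPower_regular_general
    (K : Type) [Field K] (p : ℕ) [Fact p.Prime] [CharP K p]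
    (C : Type) [CommGroup C] [Fintype C]
    (k : ℕ) (hcard : Fintype.card C = p ^ k)
    (g : C) (hg : ∀ x : C, x ∈ Subgroup.zpowers g)
    (n : ℕ) (h0 : 0 < n) (h1 : n < p ^ k) :
    ¬ ∃ (M : Type) (_ : AddCommGroup M) (_ : Module K M) (a : Module.End K M)
        (_ : a ^ (p ^ k) = 1)
        (e : (⋀[K]^n (MonoidAlgebra K C)) ≃ₗ[K] (K × M)),
        ∀ x, e (epMap n (LinearMap.mulLeft K (MonoidAlgebra.of K C g)) x)
          = (LinearMap.prodMap LinearMap.id (a : M →ₗ[K] M)) (e x) := by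
  rintro ⟨M, _, _, a, -, e, he⟩
  simp only [epMap_eq_map] at he
  have hC : IsPGroup p C := .of_card (Nat.card_eq_fintype_card.trans hcard)
  set φ := LinearMap.fst K K M ∘ₗ e.toLinearMap
  have hφ : φ ∘ₗ exteriorPower.map n (LinearMap.mulLeft K (MonoidAlgebra.of K C g)) = φ :=
    LinearMap.ext fun x => by
      simp only [φ, LinearMap.comp_apply, LinearEquiv.coe_coe, he, LinearMap.prodMap_apply,
        LinearMap.fst_apply, LinearMap.id_apply]
  have hw : exteriorPower.map n (LinearMap.mulLeft K (MonoidAlgebra.of K C g)) (e.symm (1, 0))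
      = e.symm (1, 0) :=
    e.injective (by simp only [he, LinearEquiv.apply_symm_apply, LinearMap.prodMap_apply,
      LinearMap.id_apply, map_zero])
  have h := exteriorPower.apply_eq_zero_of_map_mulLeft_invariant hC hg h0 (hcard ▸ h1) hφ hw
  simp [φ] at h

/-- **The trivial module is not a direct summand of `⋀^n K[C]` (Lemma 4.3/4.4 of
Bryant–Johnson).**  Let `K` be a field of prime characteristic `p` and `C` a cyclic
group of order `q = p^k` with `k ≥ 1`, with generator `g`.  For `0 < n < q` there is no
`K[C]`-module `M` with `⋀^n K[C] ≅ V₁ ⊕ M`, where `V₁` is the one-dimensional trivial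
module.  A `K[C]`-module is encoded as a `K`-vector space `M` together with the action
`a` of the generator `g`, an endomorphism satisfying `a ^ q = 1`; an isomorphism of
`K[C]`-modules is a `K`-linear equivalence intertwining the actions of `g` (the action
on `V₁ ⊕ M = K × M` being `id × a`). -/
theorem trivial_not_summand_of_exteriorPower_regular
    (K : Type) [Field K] (p : ℕ) [Fact p.Prime] [CharP K p]
    (C : Type) [CommGroup C] [Fintype C]
    (k : ℕ) (hk : 1 ≤ k) (hcard : Fintype.card C = p ^ k)
    (g : C) (hg : ∀ x : C, x ∈ Subgroup.zpowers g)
    (n : ℕ) (h0 : 0 < n) (h1 : n < p ^ k) :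
    ¬ ∃ (M : Type) (_ : AddCommGroup M) (_ : Module K M) (a : Module.End K M)
        (_ : a ^ (p ^ k) = 1)
        (e : (⋀[K]^n (MonoidAlgebra K C)) ≃ₗ[K] (K × M)),
        ∀ x, e (epMap n (LinearMap.mulLeft K (MonoidAlgebra.of K C g)) x)
          = (LinearMap.prodMap LinearMap.id (a : M →ₗ[K] M)) (e x) :=
  trivial_not_summand_of_exteriorPower_regular_general K p C k hcard g hg n h0 h1
end

section
/- Let K be a field of prime characteristic p and let r be a positive integer, written r = ap + b with 0 ≤ b < p. Regard the K[X]-module M_r = K[X]/((X−1)^r) as a module over the polynomial ring K[Y] via Y ↦ X^p. Then there is an isomorphism of K[Y]-modules M_r ≅ (K[Y]/((Y−1)^a))^{⊕(p−b)} ⊕ (K[Y]/((Y−1)^{a+1}))^{⊕b}. (Equivalently: the restriction of the r-dimensional indecomposable module for a cyclic p-group C over K to the subgroup of index p in C decomposes as (p−b) copies of the a-dimensional indecomposable plus b copies of the (a+1)-dimensional indecomposable.) -/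
/-!
Write `T = X - 1`. The classes of `T ^ m`, `m < r`, form a basis of `M_r`, and in characteristic
`p` we have `X ^ p - 1 = T ^ p`, so `Y - 1` acts on this basis as the shift `T ^ m ↦ T ^ (m + p)`.
Sorting the exponents by their residue `i` mod `p` splits the basis into `p` chains
`T ^ i, T ^ (i + p), T ^ (i + 2p), …`, of length `a + 1` for `i < b` and `a` for `i ≥ b`; along each
chain `Y - 1` acts exactly as `Y - 1` does on the basis `(Y - 1) ^ k` of `K[Y]/((Y - 1) ^ n)`.
This shift property is independent of the characteristic, which only enters through `X ^ p - 1`.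
-/

open Polynomial

local notation:max "Q[" R "; " n "]" => R[X] ⧸ Ideal.span {((X : R[X]) - 1) ^ n}

section SubOnePowBasis

variable (R : Type*) [CommRing R]

noncomputable def adjoinRootXPowEquiv (n : ℕ) : AdjoinRoot ((X : R[X]) ^ n) ≃ₐ[R] Q[R; n] :=
  Ideal.quotientEquivAlg _ _ (algEquivAevalXAddC (-1)) <| by
    simp [Ideal.map_span, sub_eq_add_neg]

theorem adjoinRootXPowEquiv_root (n : ℕ) :
    adjoinRootXPowEquiv R n (AdjoinRoot.root _) = Ideal.Quotient.mk _ (X - 1) := by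
  change Ideal.Quotient.mk _ (algEquivAevalXAddC (-1) X) = _
  simp [sub_eq_add_neg]

variable [Nontrivial R]

noncomputable def subOnePowBasis (n : ℕ) : Module.Basis (Fin n) R Q[R; n] :=
  ((AdjoinRoot.powerBasis' ((monic_X (R := R)).pow n)).basis.map
    (adjoinRootXPowEquiv R n).toLinearEquiv).reindex (finCongr (by simp))

theorem subOnePowBasis_apply (n : ℕ) (j : Fin n) :
    subOnePowBasis R n j = Ideal.Quotient.mk _ (((X : R[X]) - 1) ^ (j : ℕ)) := by
  rw [subOnePowBasis, Module.Basis.reindex_apply, Module.Basis.map_apply, PowerBasis.basis_eq_pow]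
  simp [adjoinRootXPowEquiv_root]

end SubOnePowBasis

theorem Ideal.Quotient.mk_pow_eq_zero_of_le {S : Type*} [CommRing S] (f : S) {n m : ℕ}
    (h : n ≤ m) : Ideal.Quotient.mk (Ideal.span {f ^ n}) (f ^ m) = 0 :=
  Ideal.Quotient.eq_zero_iff_mem.2 <| Ideal.mem_span_singleton.2 <| pow_dvd_pow _ h

theorem Ideal.Quotient.smul_one_eq_mk {S : Type*} [CommRing S] (I : Ideal S) (f : S) :
    f • (1 : S ⧸ I) = Ideal.Quotient.mk I f := by
  rw [← Algebra.algebraMap_eq_smul_one, Ideal.Quotient.algebraMap_eq]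

section ChainIndex

variable {p a b : ℕ}

def chainIndex (hb : b < p) (m : Fin (a * p + b)) :
    (Σ _ : Fin (p - b), Fin a) ⊕ (Σ _ : Fin b, Fin (a + 1)) :=
  have hp : 0 < p := Nat.zero_lt_of_lt hb
  have hm := Nat.div_add_mod m p
  if h : (m : ℕ) % p < b then
    .inr ⟨⟨m % p, h⟩, ⟨m / p, (Nat.div_lt_iff_lt_mul hp).2 (by linarith [m.isLt])⟩⟩
  else
    .inl ⟨⟨m % p - b, by have := Nat.mod_lt m hp; omega⟩,
      ⟨m / p, Nat.lt_of_mul_lt_mul_left (a := p) (by linarith [m.isLt])⟩⟩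

def chainExponent (p b : ℕ) : (Σ _ : Fin (p - b), Fin a) ⊕ (Σ _ : Fin b, Fin (a + 1)) → ℕ
  | .inl ⟨i, k⟩ => b + i + p * k
  | .inr ⟨i, k⟩ => i + p * k

theorem chainExponent_chainIndex (hb : b < p) (m : Fin (a * p + b)) :
    chainExponent p b (chainIndex hb m) = m := by
  have hm := Nat.div_add_mod m p
  unfold chainIndex
  split_ifs <;> simp only [chainExponent] <;> omega

noncomputable def chainIndexEquiv (hb : b < p) :
    Fin (a * p + b) ≃ (Σ _ : Fin (p - b), Fin a) ⊕ (Σ _ : Fin b, Fin (a + 1)) :=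
  .ofBijective (chainIndex hb) <| (Fintype.bijective_iff_injective_and_card _).2
    ⟨fun m m' h => Fin.ext <| by
      rw [← chainExponent_chainIndex hb m, h, chainExponent_chainIndex],
    by
      obtain ⟨c, rfl⟩ := Nat.exists_eq_add_of_lt hb
      simp only [Fintype.card_fin, Fintype.card_sum, Fintype.card_sigma, Finset.sum_const,
        Finset.card_univ, smul_eq_mul]
      rw [add_assoc, Nat.add_sub_cancel_left]
      ring⟩

end ChainIndex

section Chains

variable (R : Type*) [CommRing R] (p a b : ℕ)

noncomputable def chainHead (i : ℕ) : (Fin (p - b) → Q[R; a]) × (Fin b → Q[R; a + 1]) :=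
  if h : i < b then (0, Pi.single ⟨i, h⟩ 1)
  else if h' : i - b < p - b then (Pi.single ⟨i - b, h'⟩ 1, 0) else 0

noncomputable def chainVec (m : ℕ) : (Fin (p - b) → Q[R; a]) × (Fin b → Q[R; a + 1]) :=
  ((X : R[X]) - 1) ^ (m / p) • chainHead R p a b (m % p)

variable {R p a b}

theorem chainVec_add_self (hp : 0 < p) (m : ℕ) :
    chainVec R p a b (m + p) = ((X : R[X]) - 1) • chainVec R p a b m := by
  rw [chainVec, chainVec, Nat.add_div_right m hp, Nat.add_mod_right,
    pow_succ' (X - 1 : R[X]) (m / p), mul_smul]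

theorem chainVec_of_lt {m : ℕ} (h : m % p < b) :
    chainVec R p a b m =
      (0, Pi.single (⟨m % p, h⟩ : Fin b) (Ideal.Quotient.mk _ ((X - 1 : R[X]) ^ (m / p)))) := by
  rw [chainVec, chainHead, dif_pos h, Prod.smul_mk, smul_zero, ← Pi.single_smul,
    Ideal.Quotient.smul_one_eq_mk]

theorem chainVec_of_not_lt (hp : 0 < p) {m : ℕ} (h : ¬ m % p < b) :
    chainVec R p a b m =
      (Pi.single (⟨m % p - b, by have := Nat.mod_lt m hp; omega⟩ : Fin (p - b))
        (Ideal.Quotient.mk _ ((X - 1 : R[X]) ^ (m / p))), 0) := by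
  rw [chainVec, chainHead, dif_neg h, dif_pos, Prod.smul_mk, smul_zero, ← Pi.single_smul,
    Ideal.Quotient.smul_one_eq_mk]

theorem chainVec_eq_zero (hp : 0 < p) {m : ℕ} (hm : a * p + b ≤ m) : chainVec R p a b m = 0 := by
  have := Nat.div_add_mod m p
  by_cases h : m % p < b
  · rw [chainVec_of_lt h, Ideal.Quotient.mk_pow_eq_zero_of_le _, Pi.single_zero,
      Prod.mk_zero_zero]
    exact Nat.lt_of_mul_lt_mul_left (a := p) (by linarith)
  · rw [chainVec_of_not_lt hp h, Ideal.Quotient.mk_pow_eq_zero_of_le _, Pi.single_zero,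
      Prod.mk_zero_zero]
    exact Nat.le_of_lt_succ <| Nat.lt_of_mul_lt_mul_left (a := p) (by linarith [Nat.mod_lt m hp])

variable (R p a b) in
noncomputable def chainBasis [Nontrivial R] :
    Module.Basis ((Σ _ : Fin (p - b), Fin a) ⊕ (Σ _ : Fin b, Fin (a + 1))) R
      ((Fin (p - b) → Q[R; a]) × (Fin b → Q[R; a + 1])) :=
  (Pi.basis fun _ => subOnePowBasis R a).prod (Pi.basis fun _ => subOnePowBasis R (a + 1))

theorem chainBasis_chainIndex [Nontrivial R] (hb : b < p) (m : Fin (a * p + b)) :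
    chainBasis R p a b (chainIndex hb m) = chainVec R p a b m := by
  unfold chainIndex
  split_ifs with h
  · rw [chainVec_of_lt h]
    ext : 1 <;> simp [chainBasis, subOnePowBasis_apply]
  · rw [chainVec_of_not_lt (Nat.zero_lt_of_lt hb) h]
    ext : 1 <;> simp [chainBasis, subOnePowBasis_apply]

end Chains

section RestrictionEquiv

variable {R : Type*} [CommRing R] [Nontrivial R] {p a b : ℕ}

noncomputable def restrictionEquiv (hb : b < p) :
    Q[R; a * p + b] ≃ₗ[R] (Fin (p - b) → Q[R; a]) × (Fin b → Q[R; a + 1]) :=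
  (subOnePowBasis R _).equiv (chainBasis R p a b) (chainIndexEquiv hb)

theorem restrictionEquiv_mk_sub_one_pow (hb : b < p) (m : ℕ) :
    restrictionEquiv hb (Ideal.Quotient.mk _ ((X - 1 : R[X]) ^ m)) = chainVec R p a b m := by
  by_cases hm : m < a * p + b
  · rw [← subOnePowBasis_apply R _ ⟨m, hm⟩, restrictionEquiv, Module.Basis.equiv_apply,
      chainIndexEquiv, Equiv.ofBijective_apply, chainBasis_chainIndex]
  · rw [Ideal.Quotient.mk_pow_eq_zero_of_le _ (not_lt.1 hm), map_zero,
      chainVec_eq_zero (Nat.zero_lt_of_lt hb) (not_lt.1 hm)]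

theorem restrictionEquiv_sub_one_pow_smul (hb : b < p) (x : Q[R; a * p + b]) :
    restrictionEquiv hb (((X - 1 : R[X]) ^ p) • x) = (X - 1 : R[X]) • restrictionEquiv hb x := by
  suffices (restrictionEquiv hb).toLinearMap ∘ₗ DistribSMul.toLinearMap R _ ((X - 1 : R[X]) ^ p) =
      DistribSMul.toLinearMap R _ (X - 1 : R[X]) ∘ₗ (restrictionEquiv hb).toLinearMap from
    LinearMap.congr_fun this x
  refine (subOnePowBasis R _).ext fun j => ?_
  simp only [LinearMap.comp_apply, DistribSMul.toLinearMap_apply, LinearEquiv.coe_coe,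
    subOnePowBasis_apply]
  rw [← Ideal.Quotient.mk_eq_mk, ← Submodule.Quotient.mk_smul, Ideal.Quotient.mk_eq_mk,
    Ideal.Quotient.mk_eq_mk, smul_eq_mul, ← pow_add, add_comm p, restrictionEquiv_mk_sub_one_pow,
    restrictionEquiv_mk_sub_one_pow, chainVec_add_self (Nat.zero_lt_of_lt hb)]

theorem restrictionEquiv_X_pow_smul [Fact p.Prime] [CharP R p] (hb : b < p)
    (x : Q[R; a * p + b]) :
    restrictionEquiv hb (((X : R[X]) ^ p) • x) = (X : R[X]) • restrictionEquiv hb x := by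
  have hXp : (X : R[X]) ^ p = (X - 1) ^ p + 1 := by rw [sub_pow_char, one_pow, sub_add_cancel]
  rw [hXp, add_smul, one_smul, map_add, restrictionEquiv_sub_one_pow_smul, sub_smul, one_smul,
    sub_add_cancel]

end RestrictionEquiv

theorem restriction_indecomposable_cyclic_general
    (K : Type) [Field K] (p : ℕ) [Fact p.Prime] [CharP K p]
    (r a b : ℕ) (hab : r = a * p + b) (hb : b < p) :
    ∃ e : (Polynomial K ⧸ Ideal.span {((Polynomial.X : Polynomial K) - 1) ^ r}) ≃ₗ[K]
        ((Fin (p - b) → Polynomial K ⧸ Ideal.span {((Polynomial.X : Polynomial K) - 1) ^ a}) ×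
         (Fin b → Polynomial K ⧸ Ideal.span {((Polynomial.X : Polynomial K) - 1) ^ (a + 1)})),
      ∀ x, e (Ideal.Quotient.mk (Ideal.span {((Polynomial.X : Polynomial K) - 1) ^ r})
              (Polynomial.X ^ p) * x)
        = (fun i => Ideal.Quotient.mk (Ideal.span {((Polynomial.X : Polynomial K) - 1) ^ a})
              Polynomial.X * (e x).1 i,
           fun i => Ideal.Quotient.mk (Ideal.span {((Polynomial.X : Polynomial K) - 1) ^ (a + 1)})
              Polynomial.X * (e x).2 i) := by
  subst hab
  -- `f • q` on `K[X] ⧸ I` unfolds to `mk f * q`, and the action on the product is componentwise.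
  exact ⟨restrictionEquiv hb, restrictionEquiv_X_pow_smul hb⟩

/-- **Restriction of an indecomposable module for a cyclic `p`-group to the subgroup of
index `p`.**  Let `K` be a field of prime characteristic `p` and let `r = a·p + b` with
`0 ≤ b < p` be a positive integer.  Regard `M_r = K[X]/((X−1)^r)` as a module over `K[Y]`
via `Y ↦ X^p`.  Then, as `K[Y]`-modules,
`M_r ≅ (K[Y]/((Y−1)^a))^{⊕(p−b)} ⊕ (K[Y]/((Y−1)^{a+1}))^{⊕b}`.
The isomorphism is expressed as a `K`-linear equivalence intertwining the action of `Y`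
(which acts on the left by multiplication by the class of `X^p`, and on the right
componentwise by multiplication by the class of the variable). -/
theorem restriction_indecomposable_cyclic
    (K : Type) [Field K] (p : ℕ) [Fact p.Prime] [CharP K p]
    (r a b : ℕ) (hr : 0 < r) (hab : r = a * p + b) (hb : b < p) :
    ∃ e : (Polynomial K ⧸ Ideal.span {((Polynomial.X : Polynomial K) - 1) ^ r}) ≃ₗ[K]
        ((Fin (p - b) → Polynomial K ⧸ Ideal.span {((Polynomial.X : Polynomial K) - 1) ^ a}) ×
         (Fin b → Polynomial K ⧸ Ideal.span {((Polynomial.X : Polynomial K) - 1) ^ (a + 1)})),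
      ∀ x, e (Ideal.Quotient.mk (Ideal.span {((Polynomial.X : Polynomial K) - 1) ^ r})
              (Polynomial.X ^ p) * x)
        = (fun i => Ideal.Quotient.mk (Ideal.span {((Polynomial.X : Polynomial K) - 1) ^ a})
              Polynomial.X * (e x).1 i,
           fun i => Ideal.Quotient.mk (Ideal.span {((Polynomial.X : Polynomial K) - 1) ^ (a + 1)})
              Polynomial.X * (e x).2 i) :=
  restriction_indecomposable_cyclic_general K p r a b hab hb
end

section
/- Let K be a field of prime characteristic p, let C be a cyclic group of order q = p^k with k ≥ 1 and generator g, and let C̃ = ⟨g^p⟩ be the subgroup of C of index p. For 1 ≤ r ≤ q/p let Ṽ_r = K[C̃]/((g^p − 1)^r), the r-dimensional indecomposable K[C̃]-module. Then the induced module K[C] ⊗_{K[C̃]} Ṽ_r is isomorphic, as a K[C]-module, to K[C]/((g−1)^{pr}), the indecomposable K[C]-module of dimension pr. -/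
/-!
Extending scalars along `K[C̃] → K[C]` turns the cyclic module `K[C̃]/(t^r)` into the cyclic
module `K[C]/(t^r)`, since `B ⊗_A A/(a) ≅ B/(a)` for any commutative `A`-algebra `B`. In
characteristic `p` the image of `t = g^p - 1` in `K[C]` is `(g - 1)^p`, so `t^r = (g - 1)^(pr)`.
-/

noncomputable section

variable (K : Type) [Field K] (C : Type) [CommGroup C]

/-- The group algebra `K[C̃]` of the subgroup `C̃ = ⟨g^p⟩` of index `p` of the cyclic
`p`-group `C = ⟨g⟩`. -/
abbrev SubAlg (g : C) (p : ℕ) : Type := MonoidAlgebra K (Subgroup.zpowers (g ^ p))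

/-- The algebra map `K[C̃] → K[C]` induced by the inclusion `C̃ ≤ C`. -/
def inclAlgHom (g : C) (p : ℕ) : SubAlg K C g p →ₐ[K] MonoidAlgebra K C :=
  MonoidAlgebra.mapDomainAlgHom K K (Subgroup.zpowers (g ^ p)).subtype

/-- `K[C]` as an algebra (in particular, a module) over `K[C̃]`, via the inclusion. -/
def algebraOfIncl (g : C) (p : ℕ) : Algebra (SubAlg K C g p) (MonoidAlgebra K C) :=
  (inclAlgHom K C g p).toRingHom.toAlgebra

/-- The indecomposable `K[C̃]`-module `Ṽ_r = K[C̃]/((g^p−1)^r)` of dimension `r`. -/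
abbrev SubVmod (g : C) (p r : ℕ) : Type :=
  SubAlg K C g p ⧸ Ideal.span
    {((MonoidAlgebra.of K (Subgroup.zpowers (g ^ p)) ⟨g ^ p, Subgroup.mem_zpowers _⟩ :
        SubAlg K C g p) - 1) ^ r}

/-- The indecomposable `K[C]`-module `V_s = K[C]/((g−1)^s)` of dimension `s`. -/
abbrev Vmod (g : C) (s : ℕ) : Type :=
  MonoidAlgebra K C ⧸ Ideal.span {((MonoidAlgebra.of K C g : MonoidAlgebra K C) - 1) ^ s}

open TensorProduct

section BaseChange

variable {A B : Type*} [CommRing A] [CommRing B] [Algebra A B]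

theorem TensorProduct.map_mulLeft_id_apply {M : Type*} [AddCommGroup M] [Module A M]
    (b : B) (x : B ⊗[A] M) :
    TensorProduct.map (LinearMap.mulLeft A b) LinearMap.id x = b • x := by
  induction x using TensorProduct.induction_on with
  | zero => simp
  | tmul c m => simp [TensorProduct.smul_tmul']
  | add x y hx hy => simp [hx, hy]

def tensorQuotSpanSingletonEquiv {a : A} {b : B} (h : algebraMap A B a = b) :
    B ⊗[A] (A ⧸ Ideal.span {a}) ≃ₗ[B] B ⧸ Ideal.span {b} :=
  (Algebra.TensorProduct.quotIdealMapEquivTensorQuot (A := A) B (Ideal.span {a})).symm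
    |>.toLinearEquiv.trans
      (Submodule.quotEquivOfEq _ _ (by rw [Ideal.map_span, Set.image_singleton, h]))

end BaseChange

theorem sub_one_pow_mul_char {R : Type*} [CommRing R] {p : ℕ} [Fact p.Prime] [CharP R p]
    (x : R) (r : ℕ) : (x ^ p - 1) ^ r = (x - 1) ^ (p * r) := by
  rw [pow_mul, sub_pow_char (p := p), one_pow]

theorem inclAlgHom_of (g : C) (p : ℕ) :
    inclAlgHom K C g p (MonoidAlgebra.of K _ ⟨g ^ p, Subgroup.mem_zpowers _⟩) =
      MonoidAlgebra.of K C (g ^ p) :=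
  MonoidAlgebra.mapDomain_single

/-- The isomorphism is a `K`-linear equivalence intertwining the actions of the generator `g`
(on the induced module, by multiplication on the left tensor factor); this is exactly a
`K[C]`-module isomorphism. -/
theorem induced_indecomposable_cyclic
    (p : ℕ) [Fact p.Prime] [CharP K p]
    (g : C) (r : ℕ) :
    let _inst : Algebra (SubAlg K C g p) (MonoidAlgebra K C) := algebraOfIncl K C g p
    ∃ e : (TensorProduct (SubAlg K C g p) (MonoidAlgebra K C) (SubVmod K C g p r))
            ≃ₗ[K] Vmod K C g (p * r),
      ∀ x, e (TensorProduct.map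
                (LinearMap.mulLeft (SubAlg K C g p) (MonoidAlgebra.of K C g))
                LinearMap.id x)
        = Ideal.Quotient.mk _ (MonoidAlgebra.of K C g) * e x := by
  intro _
  have : CharP (MonoidAlgebra K C) p := charP_of_injective_algebraMap' K p
  have hgen : algebraMap (SubAlg K C g p) (MonoidAlgebra K C)
      ((MonoidAlgebra.of K _ ⟨g ^ p, Subgroup.mem_zpowers _⟩ - 1) ^ r) =
        (MonoidAlgebra.of K C g - 1) ^ (p * r) := by
    change inclAlgHom K C g p _ = _
    rw [map_pow, map_sub, map_one, inclAlgHom_of, map_pow, sub_one_pow_mul_char]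
  refine ⟨(tensorQuotSpanSingletonEquiv hgen).restrictScalars K, fun x => ?_⟩
  rw [TensorProduct.map_mulLeft_id_apply, LinearEquiv.restrictScalars_apply,
    LinearEquiv.restrictScalars_apply, map_smul, Algebra.smul_def]
  rfl

end
end

section
/- Let K be a field, G a group, and V a finite-dimensional K-linear representation of G of dimension r. For every j with 0 ≤ j ≤ r, the multiplication map of the exterior algebra induces an isomorphism of representations of G: ⋀^j V ≅ Hom_K(⋀^{r−j} V, ⋀^r V), where G acts on ⋀^j V, ⋀^{r−j} V and ⋀^r V by the induced actions and on the Hom-space by (g·f)(x) = g·f(g^{-1}·x). -/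
/-!
The wedge product `⋀^j V × ⋀^(r-j) V → ⋀^r V` is a perfect pairing. In the basis `e_s` of
wedge products of a basis of `V`, `e_s ∧ e_t` vanishes unless `t` is the complement of `s`, in
which case it is `± e_univ`; so wedging `x` with `e_{sᶜ}` recovers the `s`-th coordinate of `x`
up to sign, and the pairing is injective. Since `r.choose j = r.choose (r - j)` it is then
bijective. Equivariance holds because `⋀ g` is multiplicative: `g x ∧ y = g (x ∧ g⁻¹ y)`.
-/

open Module

namespace exteriorPower

section Wedge

variable {R M N : Type*} [CommRing R] [AddCommGroup M] [Module R M] [AddCommGroup N] [Module R N]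
  {m n k : ℕ}

variable (R M) in
noncomputable def wedge (h : m + n = k) : ⋀[R]^m M →ₗ[R] ⋀[R]^n M →ₗ[R] ⋀[R]^k M :=
  LinearMap.mk₂ R (fun x y => ⟨x * y, h ▸ SetLike.mul_mem_graded x.2 y.2⟩)
    (fun _ _ _ => Subtype.ext (add_mul _ _ _))
    (fun _ _ _ => Subtype.ext (smul_mul_assoc _ _ _))
    (fun _ _ _ => Subtype.ext (mul_add _ _ _))
    (fun _ _ _ => Subtype.ext (mul_smul_comm _ _ _))

@[simp]
lemma coe_wedge_apply (h : m + n = k) (x : ⋀[R]^m M) (y : ⋀[R]^n M) :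
    (wedge R M h x y : ExteriorAlgebra R M) = x * y :=
  rfl

lemma epMap_wedge (f : M →ₗ[R] N) (h : m + n = k) (x : ⋀[R]^m M) (y : ⋀[R]^n M) :
    epMap k f (wedge R M h x y) = wedge R N h (epMap m f x) (epMap n f y) :=
  Subtype.ext (map_mul (ExteriorAlgebra.map f) _ _)

lemma epMap_epMap (f : N →ₗ[R] M) (g : M →ₗ[R] N) (x : ⋀[R]^n M) :
    epMap n f (epMap n g x) = epMap n (f ∘ₗ g) x := by
  apply Subtype.ext
  show ExteriorAlgebra.map f (ExteriorAlgebra.map g x) = ExteriorAlgebra.map (f ∘ₗ g) x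
  rw [← ExteriorAlgebra.map_comp_map, AlgHom.comp_apply]

lemma epMap_id (x : ⋀[R]^n M) : epMap n LinearMap.id x = x :=
  Subtype.ext (by simp [epMap])

lemma wedge_epMap_left {f g : M →ₗ[R] M} (hfg : f ∘ₗ g = LinearMap.id) (h : m + n = k)
    (x : ⋀[R]^m M) (y : ⋀[R]^n M) :
    wedge R M h (epMap m f x) y = epMap k f (wedge R M h x (epMap n g y)) := by
  rw [epMap_wedge, epMap_epMap, hfg, epMap_id]

end Wedge

section Nondegenerate

variable {R M : Type*} [CommRing R] [AddCommGroup M] [Module R M]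
  {I : Type*} [LinearOrder I] [Fintype I] {m n k : ℕ}

lemma exists_mul_basis_compl_eq (b : Basis I R M) (h : m + n = Fintype.card I) (x : ⋀[R]^m M)
    (s : Set.powersetCard I m) :
    ∃ ε : ℤˣ, (x : ExteriorAlgebra R M) *
        b.ExteriorAlgebra (Set.powersetCard.compl ((add_comm n m).trans h) s) =
      ε • ((b.exteriorPower m).repr x s • b.ExteriorAlgebra Finset.univ) := by
  set t := Set.powersetCard.compl ((add_comm n m).trans h) s
  have hst : Disjoint s.val t.val := by
    simpa [t] using disjoint_compl_right
  have hunion : (Set.powersetCard.disjUnion hst : Finset I) = Finset.univ := by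
    simp [t]
  refine ⟨(Set.powersetCard.permOfDisjoint hst).sign, ?_⟩
  conv_lhs => rw [← (b.exteriorPower m).sum_repr x]
  rw [Submodule.coe_sum, Finset.sum_mul, Finset.sum_eq_single s]
  · rw [Submodule.coe_smul, smul_mul_assoc, ← ExteriorAlgebra.basis_eq_coe_basis,
      ExteriorAlgebra.basis_mul_of_disjoint _ _ _ hst, hunion, smul_comm]
  · intro u _ hus
    rw [Submodule.coe_smul, smul_mul_assoc, ← ExteriorAlgebra.basis_eq_coe_basis,
      ExteriorAlgebra.basis_mul_of_not_disjoint, smul_zero]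
    intro hut
    refine hus (Set.powersetCard.eq_iff_subset.2 fun a hau => ?_)
    by_contra has
    exact Finset.disjoint_left.1 hut hau (by simpa [t] using has)
  · simp

theorem wedge_injective (b : Basis I R M) (h : m + n = k) (hk : Fintype.card I = k) :
    Function.Injective (wedge R M h) := by
  subst hk
  refine (injective_iff_map_eq_zero _).2 fun x hx => (b.exteriorPower m).ext_elem fun s => ?_
  obtain ⟨ε, hε⟩ := exists_mul_basis_compl_eq b h x s
  rw [ExteriorAlgebra.basis_eq_coe_basis, ← coe_wedge_apply h, hx, LinearMap.zero_apply,
    ZeroMemClass.coe_zero, eq_comm, smul_eq_zero_iff_eq] at hε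
  simpa using congrArg (fun v => b.ExteriorAlgebra.repr v Finset.univ) hε

end Nondegenerate

theorem wedge_bijective {K V : Type*} [Field K] [AddCommGroup V] [Module K V]
    [FiniteDimensional K V] {m n k : ℕ} (h : m + n = k) (hk : finrank K V = k) :
    Function.Bijective (wedge K V h) := by
  have hinj := wedge_injective (Module.finBasis K V) h ((Fintype.card_fin _).trans hk)
  have hdim : finrank K (⋀[K]^m V) = finrank K (⋀[K]^n V →ₗ[K] ⋀[K]^k V) := by
    rw [finrank_linearMap, finrank_eq, finrank_eq, finrank_eq, hk, ← h, Nat.choose_self, mul_one,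
      Nat.choose_symm_add]
  exact ⟨hinj, (LinearMap.injective_iff_surjective_of_finrank_eq_finrank
    (V₂ := ⋀[K]^n V →ₗ[K] ⋀[K]^k V) hdim).1 hinj⟩

end exteriorPower

/-- **Exterior-power duality for representations.**  Let `K` be a field, `G` a group and
`V` a finite-dimensional `K`-linear representation of `G` of dimension `r`.  For every
`0 ≤ j ≤ r` the multiplication map of the exterior algebra induces an isomorphism of
representations `⋀^j V ≅ Hom_K(⋀^{r−j} V, ⋀^r V)`, where `G` acts on the `Hom`-space by
`(g · f)(x) = g · f(g⁻¹ · x)`.  The isomorphism is expressed as a `K`-linear equivalence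
`e` satisfying `e x y = x * y` (multiplication in the exterior algebra) which
intertwines the `G`-actions. -/
theorem exteriorPower_duality
    (K : Type) [Field K] (G : Type) [Group G]
    (V : Type) [AddCommGroup V] [Module K V] [FiniteDimensional K V]
    (r : ℕ) (hr : Module.finrank K V = r)
    (ρ : Representation K G V) (j : ℕ) (hj : j ≤ r) :
    ∃ e : (⋀[K]^j V) ≃ₗ[K] ((⋀[K]^(r - j) V) →ₗ[K] (⋀[K]^r V)),
      (∀ (x : ⋀[K]^j V) (y : ⋀[K]^(r - j) V),
        ((e x y : ⋀[K]^r V) : ExteriorAlgebra K V)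
          = (x : ExteriorAlgebra K V) * (y : ExteriorAlgebra K V)) ∧
      (∀ (s : G) (x : ⋀[K]^j V),
        e (epMap j (ρ s : V →ₗ[K] V) x)
          = (epMap r (ρ s : V →ₗ[K] V)).comp
              ((e x).comp (epMap (r - j) (ρ s⁻¹ : V →ₗ[K] V)))) := by
  have h : j + (r - j) = r := Nat.add_sub_cancel' hj
  refine ⟨.ofBijective _ (exteriorPower.wedge_bijective h hr), fun _ _ => rfl,
    fun s x => LinearMap.ext fun y => ?_⟩
  exact exteriorPower.wedge_epMap_left (LinearMap.ext (ρ.self_inv_apply s)) h x y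
end

section
/- Let p be a prime and let m and d be positive integers with d dividing m and d dividing p − 1. In the quotient ring R = ℤ[x]/(x^m − 1), let w denote the class of x^{m/d} (an element of multiplicative order d). Then the element 1 + w + w² + ⋯ + w^{p−1} of R is not a zero divisor: for every u ∈ R, if u·(1 + w + ⋯ + w^{p−1}) = 0 then u = 0. -/
/-!
Since `w ^ d = 1`, the norm element `N = 1 + w + ⋯ + w^(d-1)` absorbs `w`, so writing
`p = d k + 1` the sum `G = 1 + w + ⋯ + w^(p-1)` equals `1 + k N` and satisfies `G N = p N`.
If `u G = 0` then `p (u N) = 0`; the ring is a free `ℤ`-module (`X^m - 1` is monic), so `u N = 0`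
and finally `u = u G - k (u N) = 0`.
-/

open Finset Polynomial
open scoped nonZeroDivisors

lemma Module.Free.isAddTorsionFree (R M : Type*) [Semiring R] [IsAddTorsionFree R]
    [AddCommMonoid M] [Module R M] [Module.Free R M] : IsAddTorsionFree M where
  nsmul_right_injective n hn a b hab := by
    let e := (Module.Free.chooseBasis R M).repr
    refine e.injective (nsmul_right_injective hn ?_)
    simpa only [map_nsmul] using congrArg e hab

section PeriodicGeomSum

variable {R : Type*} [CommRing R] {w : R} {d : ℕ}

lemma geom_sum_mul_self_of_pow_eq_one (hw : w ^ d = 1) :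
    (∑ i ∈ range d, w ^ i) * w = ∑ i ∈ range d, w ^ i := by
  rw [← sub_eq_zero, ← mul_sub_one, geom_sum_mul, hw, sub_self]

lemma geom_sum_mul_pow_of_pow_eq_one (hw : w ^ d = 1) (j : ℕ) :
    (∑ i ∈ range d, w ^ i) * w ^ j = ∑ i ∈ range d, w ^ i := by
  induction j with
  | zero => rw [pow_zero, mul_one]
  | succ j ih => rw [pow_succ, ← mul_assoc, ih, geom_sum_mul_self_of_pow_eq_one hw]

lemma geom_sum_mul_geom_sum_of_pow_eq_one (hw : w ^ d = 1) (n : ℕ) :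
    (∑ i ∈ range d, w ^ i) * ∑ i ∈ range n, w ^ i = n • ∑ i ∈ range d, w ^ i := by
  simp only [mul_sum, geom_sum_mul_pow_of_pow_eq_one hw, sum_const, card_range]

lemma geom_sum_range_mul_of_pow_eq_one (hw : w ^ d = 1) (k : ℕ) :
    ∑ i ∈ range (d * k), w ^ i = k • ∑ i ∈ range d, w ^ i := by
  induction k with
  | zero => simp
  | succ k ih =>
    simp only [Nat.mul_succ, sum_range_add, ih, pow_add, pow_mul, hw, one_pow, one_mul,
      succ_nsmul]

theorem geom_sum_mem_nonZeroDivisors_of_pow_eq_one [IsAddTorsionFree R] (hw : w ^ d = 1)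
    {p : ℕ} (hp : p ≠ 0) (hdp : d ∣ p - 1) : ∑ i ∈ range p, w ^ i ∈ R⁰ := by
  obtain ⟨k, hk⟩ := hdp
  have hG : ∑ i ∈ range p, w ^ i = k • ∑ i ∈ range d, w ^ i + 1 := by
    rw [show p = d * k + 1 by omega, sum_range_succ, geom_sum_range_mul_of_pow_eq_one hw,
      pow_mul, hw, one_pow]
  refine mem_nonZeroDivisors_iff_right.2 fun u hu => ?_
  have huN : u * ∑ i ∈ range d, w ^ i = 0 := by
    refine (nsmul_eq_zero_iff_right hp).1 ?_
    rw [← mul_smul_comm, ← geom_sum_mul_geom_sum_of_pow_eq_one hw,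
      mul_comm _ (∑ i ∈ range p, _), ← mul_assoc, hu, zero_mul]
  rwa [hG, mul_add, mul_smul_comm, huN, smul_zero, zero_add, mul_one] at hu

end PeriodicGeomSum

theorem not_zeroDivisor_geomSum_in_cyclicGroupRing_general
    (p m d : ℕ) (hp : p.Prime) (hm : 0 < m)
    (hdm : d ∣ m) (hdp : d ∣ p - 1)
    (u : Polynomial ℤ ⧸ Ideal.span {(Polynomial.X : Polynomial ℤ) ^ m - 1}) :
    u * (∑ i ∈ Finset.range p,
        (Ideal.Quotient.mk (Ideal.span {(Polynomial.X : Polynomial ℤ) ^ m - 1})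
          (Polynomial.X ^ (m / d))) ^ i) = 0 → u = 0 := by
  have hmonic : (X ^ m - 1 : ℤ[X]).Monic := by simpa using monic_X_pow_sub_C (1 : ℤ) hm.ne'
  have := hmonic.free_quotient
  have := Module.Free.isAddTorsionFree ℤ (ℤ[X] ⧸ Ideal.span {(X ^ m - 1 : ℤ[X])})
  have hw : Ideal.Quotient.mk (Ideal.span {(X ^ m - 1 : ℤ[X])}) (X ^ (m / d)) ^ d = 1 := by
    rw [← map_pow, ← pow_mul, Nat.div_mul_cancel hdm, ← sub_eq_zero,
      ← map_one (Ideal.Quotient.mk _), ← map_sub, Ideal.Quotient.mk_singleton_self]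
  exact mem_nonZeroDivisors_iff_right.1
    (geom_sum_mem_nonZeroDivisors_of_pow_eq_one hw hp.ne_zero hdp) u

/-- **A non-zero-divisor in `ℤ[x]/(x^m − 1)`.**
Let `p` be a prime and let `m`, `d` be positive integers with `d ∣ m` and `d ∣ p − 1`.
In `R = ℤ[x]/(x^m − 1)` let `w` be the class of `x^(m/d)` (an element of multiplicative
order `d`).  Then `1 + w + w² + ⋯ + w^(p−1)` is not a zero divisor: any `u ∈ R` with
`u · (1 + w + ⋯ + w^(p−1)) = 0` satisfies `u = 0`. -/
theorem not_zeroDivisor_geomSum_in_cyclicGroupRing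
    (p m d : ℕ) (hp : p.Prime) (hm : 0 < m) (hd : 0 < d)
    (hdm : d ∣ m) (hdp : d ∣ p - 1)
    (u : Polynomial ℤ ⧸ Ideal.span {(Polynomial.X : Polynomial ℤ) ^ m - 1}) :
    u * (∑ i ∈ Finset.range p,
        (Ideal.Quotient.mk (Ideal.span {(Polynomial.X : Polynomial ℤ) ^ m - 1})
          (Polynomial.X ^ (m / d))) ^ i) = 0 → u = 0 :=
  not_zeroDivisor_geomSum_in_cyclicGroupRing_general p m d hp hm hdm hdp u
end
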